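/- arXiv:1706.02156 — 3 statements merged into one kernel-verified Lean document; each statement's English description precedes it below -/
import Mathlib

section
/- For all integers n \geq 0, the central binomial coefficient satisfies C(2n+2, n+1) < 2^{2n} * 4 / sqrt(\pi * (n+1)); equivalently, C(2n+2,n+1) * sqrt(\pi*(n+1)) < 2^{2n+2}. -/
/-! Wallis' product `W k` satisfies `W k · (2k+1) · C(2k,k)² = 16^k`, and its lower bound
`W k ≥ (2k+1)/(2k+2) · π/2` (from comparing the integrals of `sin^(2k+1)` and `sin^(2k+2)`)
turns into `C(2k,k)² · π k ≤ 16^k · 4k(k+1)/(2k+1)² < 16^k`. Take `k = n+1` and square roots. -/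

open Nat Real Real.Wallis

theorem Nat.centralBinom_mul_factorial_sq (k : ℕ) : centralBinom k * k ! ^ 2 = (2 * k)! := by
  rw [centralBinom_eq_two_mul_choose, sq, ← mul_assoc]
  convert choose_mul_factorial_mul_factorial (Nat.le_mul_of_pos_left k two_pos) using 3
  omega

theorem Real.Wallis.W_mul_centralBinom_sq (k : ℕ) :
    W k * (2 * k + 1) * (centralBinom k : ℝ) ^ 2 = 16 ^ k := by
  have hfac : (centralBinom k : ℝ) * (k ! : ℝ) ^ 2 = (2 * k)! := by
    exact_mod_cast centralBinom_mul_factorial_sq k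
  have h16 : (2 : ℝ) ^ (4 * k) = 16 ^ k := by rw [pow_mul]; norm_num
  have hC : (centralBinom k : ℝ) ≠ 0 := by exact_mod_cast centralBinom_ne_zero k
  rw [W_eq_factorial_ratio, ← hfac, h16]
  field_simp

theorem Nat.centralBinom_sq_mul_pi_mul_lt_sixteen_pow (k : ℕ) :
    (centralBinom k : ℝ) ^ 2 * π * k < 16 ^ k := by
  have hW : (2 * k + 1) ^ 2 * π * k ≤ 4 * k * (k + 1) * (W k * (2 * k + 1)) := by
    have h := le_W k
    rw [div_mul_eq_mul_div, div_le_iff₀ (by positivity)] at h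
    nlinarith [mul_le_mul_of_nonneg_left h (by positivity : (0 : ℝ) ≤ k * (2 * k + 1))]
  have key : (2 * k + 1) ^ 2 * ((centralBinom k : ℝ) ^ 2 * π * k) ≤ 4 * k * (k + 1) * 16 ^ k := by
    rw [← W_mul_centralBinom_sq k]
    nlinarith [mul_le_mul_of_nonneg_right hW (sq_nonneg (centralBinom k : ℝ))]
  refine lt_of_mul_lt_mul_left (key.trans_lt ?_) (sq_nonneg (2 * k + 1 : ℝ))
  nlinarith [pow_pos (by norm_num : (0 : ℝ) < 16) k]

/-- For all `n ≥ 0`, `C(2n+2, n+1) < 2^(2n) * 4 / √(π (n+1))`, equivalently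
`C(2n+2,n+1) * √(π (n+1)) < 2^(2n+2)`. -/
theorem stmt_3 (n : ℕ) :
    (Nat.choose (2 * n + 2) (n + 1) : ℝ) * Real.sqrt (Real.pi * (n + 1))
      < 2 ^ (2 * n + 2) := by
  have hC : Nat.choose (2 * n + 2) (n + 1) = centralBinom (n + 1) := by
    rw [centralBinom_eq_two_mul_choose, mul_add_one]
  have h16 : ((2 : ℝ) ^ (2 * n + 2)) ^ 2 = 16 ^ (n + 1) := by
    rw [← pow_mul, show (2 * n + 2) * 2 = 4 * (n + 1) by ring, pow_mul]; norm_num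
  refine lt_of_pow_lt_pow_left₀ 2 (by positivity) ?_
  rw [mul_pow, sq_sqrt (by positivity), h16, hC, ← mul_assoc]
  exact_mod_cast centralBinom_sq_mul_pi_mul_lt_sixteen_pow (n + 1)
end

section
/- Let k be a field and \Lambda the exterior algebra over k on generators x_1,...,x_n, y_1,...,y_n (all in degree 1). Set w = \sum_{i=1}^n x_i y_i \in \Lambda_2. If char k = 0 or char k > (n+1)/2, then for each i \leq n-1 the multiplication map \lambda_w : \Lambda_i \to \Lambda_{i+2} is injective, and for each i \geq n-1 it is surjective. -/
/-!
Strong Lefschetz for every power, by induction on the number of pairs `x_j, y_j`: `w^s` maps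
`Λ_d` injectively to `Λ_{d+2s}` when `d + s ≤ n` and onto it when `d + s ≥ n`, as long as the
integers up to half the relevant degree are nonzero in `k`. Adjoining a pair `x, y` to the
subalgebra `Λ'` splits `Λ_d = Λ'_d ⊕ x Λ'_{d-1} ⊕ y Λ'_{d-1} ⊕ x y Λ'_{d-2}`, the sum being direct
by contraction with the dual coordinates of `x` and `y`. As `w = w' + x y` with `x y` central and
square-zero,

    w^(s+1) (p + x q + y r + x y u)
      = w'^(s+1) p + x w'^(s+1) q + y w'^(s+1) r + x y (w'^(s+1) u + (s+1) w'^s p),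

so every component reduces to `Λ'`; only in the boundary case `d + s = n` does one have to divide
by `s + 1`, which is where the characteristic enters.
-/

open ExteriorAlgebra

theorem Commute.add_pow_succ_of_mul_self_eq_zero {A : Type*} [Semiring A] {u e : A}
    (h : Commute u e) (he : e * e = 0) (s : ℕ) :
    (u + e) ^ (s + 1) = u ^ (s + 1) + (s + 1) • (u ^ s * e) := by
  induction s with
  | zero => simp
  | succ s ih =>
    rw [pow_succ, ih]
    simp only [add_mul, mul_add, smul_mul_assoc, mul_assoc, he, mul_zero, smul_zero, add_zero]
    rw [← h.eq, ← mul_assoc, ← pow_succ, ← pow_succ, succ_nsmul _ (s + 1)]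
    abel

namespace ExteriorAlgebra

variable {R M : Type*} [CommRing R] [AddCommGroup M] [Module R M]

theorem ι_mul_ι_anticomm (u v : M) : ι R u * ι R v = -(ι R v * ι R u) :=
  eq_neg_of_add_eq_zero_left (ι_add_mul_swap u v)

theorem ι_mul_ι_mul_anticomm (u v : M) (z : ExteriorAlgebra R M) :
    ι R u * (ι R v * z) = -(ι R v * (ι R u * z)) := by
  rw [← mul_assoc, ← mul_assoc, ι_mul_ι_anticomm, neg_mul]

theorem ι_mul_ι_mul_self (u : M) (z : ExteriorAlgebra R M) : ι R u * (ι R u * z) = 0 := by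
  rw [← mul_assoc, ι_sq_zero, zero_mul]

theorem commute_ι_mul_ι (u v : M) (z : ExteriorAlgebra R M) : Commute (ι R u * ι R v) z := by
  induction z using ExteriorAlgebra.induction with
  | algebraMap r => exact (Algebra.commutes r _).symm
  | ι w =>
    change _ = _
    rw [mul_assoc, ι_mul_ι_anticomm v w, mul_neg, ← mul_assoc, ι_mul_ι_anticomm u w, neg_mul,
      neg_neg, mul_assoc]
  | mul x y hx hy => exact hx.mul_right hy
  | add x y hx hy => exact hx.add_right hy

theorem contractLeft_eq_zero_of_mem_pow {φ : Module.Dual R M} {U : Submodule R M}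
    (hφ : ∀ v ∈ U, φ v = 0) {n : ℕ} {z : ExteriorAlgebra R M} (hz : z ∈ U.map (ι R) ^ n) :
    CliffordAlgebra.contractLeft φ z = 0 := by
  refine Submodule.pow_induction_on_left _ (fun r => ?_) (fun x y hx hy => ?_)
    (fun m hm x hx => ?_) hz
  · exact CliffordAlgebra.contractLeft_algebraMap _ φ r
  · rw [map_add, hx, hy, add_zero]
  · obtain ⟨v, hv, rfl⟩ := hm
    rw [CliffordAlgebra.contractLeft_ι_mul, hx, hφ v hv, zero_smul, mul_zero, sub_zero]

theorem eq_zero_of_add_ι_mul_eq_zero {φ : Module.Dual R M} {v : M} (hv : φ v = 1)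
    {p q : ExteriorAlgebra R M} (hp : CliffordAlgebra.contractLeft φ p = 0)
    (hq : CliffordAlgebra.contractLeft φ q = 0) (h : p + ι R v * q = 0) : p = 0 ∧ q = 0 := by
  have hq0 : q = 0 := by
    simpa [hp, hq, hv, CliffordAlgebra.contractLeft_ι_mul] using
      congrArg (CliffordAlgebra.contractLeft φ) h
  exact ⟨by simpa [hq0] using h, hq0⟩

end ExteriorAlgebra

noncomputable section

namespace Lefschetz

open Finset

variable {k V I : Type*} [Field k] [AddCommGroup V] [Module k V]
  (b : Module.Basis (I ⊕ I) k V)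

def pairSpan (t : Finset I) : Submodule k V :=
  Submodule.span k (b '' (Sum.inl '' t ∪ Sum.inr '' t))

/-- `⊥` in negative degrees, so that splitting off a pair needs no case distinction in low
degrees. -/
def gradedPiece (t : Finset I) (d : ℤ) : Submodule k (ExteriorAlgebra k V) :=
  if d < 0 then ⊥ else (pairSpan b t).map (ι k) ^ d.toNat

def lefschetzElement (t : Finset I) : ExteriorAlgebra k V :=
  ∑ j ∈ t, ι k (b (.inl j)) * ι k (b (.inr j))

variable {b}

theorem gradedPiece_natCast (t : Finset I) (n : ℕ) :
    gradedPiece b t n = (pairSpan b t).map (ι k) ^ n := by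
  simp [gradedPiece]

theorem eq_zero_of_mem_gradedPiece_of_neg {t : Finset I} {d : ℤ} (hd : d < 0)
    {z : ExteriorAlgebra k V} (hz : z ∈ gradedPiece b t d) : z = 0 := by
  simpa [gradedPiece, hd] using hz

theorem mul_mem_gradedPiece {t : Finset I} {d e f : ℤ} {z z' : ExteriorAlgebra k V}
    (hz : z ∈ gradedPiece b t d) (hz' : z' ∈ gradedPiece b t e) (h : d + e = f) :
    z * z' ∈ gradedPiece b t f := by
  rcases lt_or_ge d 0 with hd | hd
  · simp [eq_zero_of_mem_gradedPiece_of_neg hd hz]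
  rcases lt_or_ge e 0 with he | he
  · simp [eq_zero_of_mem_gradedPiece_of_neg he hz']
  lift d to ℕ using hd
  lift e to ℕ using he
  subst h
  rw [← Nat.cast_add, gradedPiece_natCast, pow_add]
  rw [gradedPiece_natCast] at hz hz'
  exact Submodule.mul_mem_mul hz hz'

theorem gradedPiece_mono {t t' : Finset I} (h : t ⊆ t') (d : ℤ) :
    gradedPiece b t d ≤ gradedPiece b t' d := by
  unfold gradedPiece pairSpan
  split_ifs
  · exact le_rfl
  · gcongr

theorem ι_mem_gradedPiece_one {t : Finset I} {v : V} (hv : v ∈ pairSpan b t) :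
    ι k v ∈ gradedPiece b t 1 := by
  rw [← Nat.cast_one, gradedPiece_natCast, pow_one]
  exact Submodule.mem_map_of_mem hv

theorem ι_inl_mem_gradedPiece_one {t : Finset I} {j : I} (hj : j ∈ t) :
    ι k (b (.inl j)) ∈ gradedPiece b t 1 :=
  ι_mem_gradedPiece_one (Submodule.subset_span ⟨.inl j, .inl ⟨j, hj, rfl⟩, rfl⟩)

theorem ι_inr_mem_gradedPiece_one {t : Finset I} {j : I} (hj : j ∈ t) :
    ι k (b (.inr j)) ∈ gradedPiece b t 1 :=
  ι_mem_gradedPiece_one (Submodule.subset_span ⟨.inr j, .inr ⟨j, hj, rfl⟩, rfl⟩)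

theorem pairSpan_univ [Fintype I] : pairSpan b univ = ⊤ := by
  rw [pairSpan, coe_univ, Set.image_univ, Set.image_univ, Set.range_inl_union_range_inr,
    Set.image_univ, b.span_eq]

theorem lefschetzElement_mem_gradedPiece (t : Finset I) :
    lefschetzElement b t ∈ gradedPiece b t 2 :=
  Submodule.sum_mem _ fun _ hj => mul_mem_gradedPiece (ι_inl_mem_gradedPiece_one hj)
    (ι_inr_mem_gradedPiece_one hj) (by norm_num)

theorem lefschetzElement_pow_mul_mem_gradedPiece {t : Finset I} {d e : ℤ} {z : ExteriorAlgebra k V}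
    (hz : z ∈ gradedPiece b t d) (s : ℕ) (h : d + 2 * s = e) :
    lefschetzElement b t ^ s * z ∈ gradedPiece b t e := by
  subst h
  induction s with
  | zero => simpa using hz
  | succ s ih =>
    rw [pow_succ', mul_assoc]
    exact mul_mem_gradedPiece (lefschetzElement_mem_gradedPiece t) ih (by push_cast; ring)

theorem commute_lefschetzElement (t : Finset I) (z : ExteriorAlgebra k V) :
    Commute (lefschetzElement b t) z :=
  Commute.sum_left _ _ _ fun _ _ => commute_ι_mul_ι _ _ z

variable (b) in
def splitting (t : Finset I) (a : I) (d : ℤ) : Submodule k (ExteriorAlgebra k V) where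
  carrier := {z | ∃ p ∈ gradedPiece b t d, ∃ q ∈ gradedPiece b t (d - 1),
    ∃ r ∈ gradedPiece b t (d - 1),
    ∃ u ∈ gradedPiece b t (d - 2), z = p + ι k (b (.inl a)) * q + ι k (b (.inr a)) * r +
      ι k (b (.inl a)) * ι k (b (.inr a)) * u}
  zero_mem' := ⟨0, zero_mem _, 0, zero_mem _, 0, zero_mem _, 0, zero_mem _, by simp⟩
  add_mem' := by
    rintro _ _ ⟨p, hp, q, hq, r, hr, u, hu, rfl⟩ ⟨p', hp', q', hq', r', hr', u', hu', rfl⟩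
    exact ⟨p + p', add_mem hp hp', q + q', add_mem hq hq', r + r', add_mem hr hr',
      u + u', add_mem hu hu', by noncomm_ring⟩
  smul_mem' := by
    rintro c _ ⟨p, hp, q, hq, r, hr, u, hu, rfl⟩
    exact ⟨c • p, Submodule.smul_mem _ c hp, c • q, Submodule.smul_mem _ c hq,
      c • r, Submodule.smul_mem _ c hr, c • u, Submodule.smul_mem _ c hu,
      by simp only [smul_add, mul_smul_comm]⟩

theorem gradedPiece_le_splitting (t : Finset I) (a : I) (d : ℤ) :
    gradedPiece b t d ≤ splitting b t a d :=
  fun z hz => ⟨z, hz, 0, zero_mem _, 0, zero_mem _, 0, zero_mem _, by simp⟩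

theorem contractLeft_coord_eq_zero {t : Finset I} {c : I ⊕ I}
    (hc : c ∉ Sum.inl '' (t : Set I) ∪ Sum.inr '' t) {d : ℤ} {z : ExteriorAlgebra k V}
    (hz : z ∈ gradedPiece b t d) : CliffordAlgebra.contractLeft (b.coord c) z = 0 := by
  rcases lt_or_ge d 0 with hd | hd
  · rw [eq_zero_of_mem_gradedPiece_of_neg hd hz, map_zero]
  obtain ⟨n, rfl⟩ := Int.eq_ofNat_of_zero_le hd
  rw [gradedPiece_natCast] at hz
  refine contractLeft_eq_zero_of_mem_pow (fun v hv => ?_) hz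
  refine Submodule.span_induction (fun _ ⟨c', hc', hv⟩ => ?_) (map_zero _)
    (fun _ _ _ _ h h' => by rw [map_add, h, h', add_zero])
    (fun α _ _ h => by rw [map_smul, h, smul_zero]) hv
  rw [← hv, Module.Basis.coord_apply, Module.Basis.repr_self,
    Finsupp.single_eq_of_ne (by rintro rfl; exact hc hc')]

theorem eq_zero_of_splitting_eq_zero {a : I} {t : Finset I} (ha : a ∉ t)
    {p q r u : ExteriorAlgebra k V} {d₁ d₂ d₃ d₄ : ℤ} (hp : p ∈ gradedPiece b t d₁)
    (hq : q ∈ gradedPiece b t d₂) (hr : r ∈ gradedPiece b t d₃) (hu : u ∈ gradedPiece b t d₄)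
    (h : p + ι k (b (.inl a)) * q + ι k (b (.inr a)) * r +
      ι k (b (.inl a)) * ι k (b (.inr a)) * u = 0) :
    p = 0 ∧ q = 0 ∧ r = 0 ∧ u = 0 := by
  have hφ := fun {d} {z : ExteriorAlgebra k V} (hz : z ∈ gradedPiece b t d) =>
    contractLeft_coord_eq_zero (c := .inl a) (by simpa using ha) hz
  have hψ := fun {d} {z : ExteriorAlgebra k V} (hz : z ∈ gradedPiece b t d) =>
    contractLeft_coord_eq_zero (c := .inr a) (by simpa using ha) hz
  have hφy : b.coord (.inl a) (b (.inr a)) = 0 := by simp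
  obtain ⟨hpr, hqu⟩ := eq_zero_of_add_ι_mul_eq_zero (φ := b.coord (.inl a)) (v := b (.inl a))
    (p := p + ι k (b (.inr a)) * r) (q := q + ι k (b (.inr a)) * u) (by simp)
    (by simp [CliffordAlgebra.contractLeft_ι_mul, hφ hp, hφ hr, hφy])
    (by simp [CliffordAlgebra.contractLeft_ι_mul, hφ hq, hφ hu, hφy])
    (by rw [← h]; noncomm_ring)
  obtain ⟨rfl, rfl⟩ := eq_zero_of_add_ι_mul_eq_zero (φ := b.coord (.inr a)) (by simp)
    (hψ hp) (hψ hr) hpr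
  obtain ⟨rfl, rfl⟩ := eq_zero_of_add_ι_mul_eq_zero (φ := b.coord (.inr a)) (by simp)
    (hψ hq) (hψ hu) hqu
  exact ⟨rfl, rfl, rfl, rfl⟩

variable (k) in
def CastNeZeroUpToHalf (N : ℤ) : Prop :=
  ∀ j : ℕ, 0 < j → 2 * (j : ℤ) ≤ N → (j : k) ≠ 0

theorem CastNeZeroUpToHalf.mono {M N : ℤ} (h : CastNeZeroUpToHalf k N) (hMN : M ≤ N) :
    CastNeZeroUpToHalf k M :=
  fun j hj hjM => h j hj (hjM.trans hMN)

theorem castNeZeroUpToHalf_of_charP {N : ℕ} (h : ∀ p : ℕ, CharP k p → p = 0 ∨ N < 2 * p) :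
    CastNeZeroUpToHalf k N := by
  intro j hj hjN hj0
  have hdvd := (CharP.cast_eq_zero_iff k (ringChar k) j).1 hj0
  rcases h (ringChar k) inferInstance with h0 | hlt
  · rw [h0, zero_dvd_iff] at hdvd
    omega
  · have := Nat.le_of_dvd hj hdvd
    omega

variable (b) in
def PowInjective (t : Finset I) : Prop :=
  ∀ (d : ℤ) (s : ℕ), d + s ≤ #t → CastNeZeroUpToHalf k (d + 2 * s) →
    ∀ z ∈ gradedPiece b t d, lefschetzElement b t ^ s * z = 0 → z = 0

variable (b) in
def PowSurjective (t : Finset I) : Prop :=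
  ∀ (d : ℤ) (s : ℕ), #t ≤ d + s → CastNeZeroUpToHalf k (2 * #t - d) →
    ∀ z ∈ gradedPiece b t (d + 2 * s), ∃ w ∈ gradedPiece b t d, lefschetzElement b t ^ s * w = z

theorem powInjective_empty : PowInjective b ∅ := by
  intro d s hds _ z hz hWz
  rcases Nat.eq_zero_or_pos s with rfl | hs
  · simpa using hWz
  · exact eq_zero_of_mem_gradedPiece_of_neg
      (by simp only [card_empty, Nat.cast_zero] at hds; omega) hz

theorem PowSurjective.exists_preimage_pair {t : Finset I} (ih : PowSurjective b t) {d : ℤ}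
    (hd : 0 ≤ d) {s : ℕ} (hds : #t ≤ d + s) (hk : CastNeZeroUpToHalf k (2 * #t + 2 - d))
    {p u : ExteriorAlgebra k V} (hp : p ∈ gradedPiece b t (d + 2 * (s + 1)))
    (hu : u ∈ gradedPiece b t (d + 2 * s)) :
    ∃ p' ∈ gradedPiece b t d, ∃ u' ∈ gradedPiece b t (d - 2),
      lefschetzElement b t ^ (s + 1) * p' = p ∧
      lefschetzElement b t ^ (s + 1) * u' + (s + 1 : k) • (lefschetzElement b t ^ s * p') =
        u := by
  by_cases hlt : #t + 1 ≤ d + s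
  · obtain ⟨p', hp', rfl⟩ := ih d (s + 1) (by push_cast; omega) (hk.mono (by omega)) p
      (by exact_mod_cast hp)
    obtain ⟨u', hu', hu'eq⟩ := ih (d - 2) (s + 1) (by push_cast; omega) (hk.mono (by omega))
      (u - (s + 1 : k) • (lefschetzElement b t ^ s * p'))
      (sub_mem (by convert hu using 2; push_cast; ring)
        (Submodule.smul_mem _ _
          (lefschetzElement_pow_mul_mem_gradedPiece hp' s (by push_cast; ring))))
    exact ⟨p', hp', u', hu', rfl, by rw [hu'eq]; abel⟩
  · -- `d + s = #t`; with `W = lefschetzElement b t`, solve `(s+1) W^s a₁ = u`, then correct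
    -- `a₁` by `-(s+1)⁻¹ W v`, where `W^(s+2) v = -(s+1) (p - W^(s+1) a₁)`
    have hσ : (s + 1 : k) ≠ 0 := by exact_mod_cast hk (s + 1) (by omega) (by push_cast; omega)
    obtain ⟨a₁, ha₁, h₁⟩ := ih d s (by omega) (hk.mono (by omega)) ((s + 1 : k)⁻¹ • u)
      (Submodule.smul_mem _ _ hu)
    obtain ⟨v, hv, h₂⟩ := ih (d - 2) (s + 2) (by push_cast; omega) (hk.mono (by omega))
      (-((s + 1 : k) • (p - lefschetzElement b t ^ (s + 1) * a₁)))
      (neg_mem (Submodule.smul_mem _ _ (sub_mem (by convert hp using 2; push_cast; ring)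
        (lefschetzElement_pow_mul_mem_gradedPiece ha₁ (s + 1) (by push_cast; ring)))))
    refine ⟨a₁ - (s + 1 : k)⁻¹ • (lefschetzElement b t * v),
      sub_mem ha₁ (Submodule.smul_mem _ _
        (mul_mem_gradedPiece (lefschetzElement_mem_gradedPiece t) hv (by ring))), v, hv, ?_, ?_⟩
    · rw [mul_sub, mul_smul_comm, ← mul_assoc, ← pow_succ, h₂, smul_neg, smul_smul,
        inv_mul_cancel₀ hσ, one_smul]
      abel
    · rw [mul_sub, mul_smul_comm, ← mul_assoc, ← pow_succ, h₁, smul_sub, smul_smul,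
        mul_inv_cancel₀ hσ, one_smul, smul_smul, mul_inv_cancel₀ hσ, one_smul]
      abel

section

variable [DecidableEq I]

theorem mem_pairSpan_insert {a : I} {t : Finset I} {v : V}
    (hv : v ∈ pairSpan b (insert a t)) :
    ∃ v₀ ∈ pairSpan b t, ∃ α β : k, v = v₀ + α • b (.inl a) + β • b (.inr a) := by
  have hset : b '' (Sum.inl '' ↑(insert a t) ∪ Sum.inr '' ↑(insert a t)) =
      insert (b (.inl a)) (insert (b (.inr a)) (b '' (Sum.inl '' t ∪ Sum.inr '' t))) := by
    simp only [coe_insert, Set.image_insert_eq, Set.insert_union, Set.union_insert]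
    exact Set.insert_comm _ _ _
  rw [pairSpan, hset] at hv
  obtain ⟨α, w, hw, rfl⟩ := Submodule.mem_span_insert.1 hv
  obtain ⟨β, v₀, hv₀, rfl⟩ := Submodule.mem_span_insert.1 hw
  exact ⟨v₀, hv₀, α, β, by abel⟩

theorem ι_mul_mem_splitting {t : Finset I} {a : I} {d : ℤ} {v : V}
    (hv : v ∈ pairSpan b (insert a t)) {z : ExteriorAlgebra k V} (hz : z ∈ splitting b t a d) :
    ι k v * z ∈ splitting b t a (d + 1) := by
  obtain ⟨v₀, hv₀, α, β, rfl⟩ := mem_pairSpan_insert hv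
  obtain ⟨p, hp, q, hq, r, hr, u, hu, rfl⟩ := hz
  have h₀ := ι_mem_gradedPiece_one hv₀
  refine ⟨ι k v₀ * p, mul_mem_gradedPiece h₀ hp (by ring),
    α • p - ι k v₀ * q, sub_mem (Submodule.smul_mem _ α (by simpa using hp))
      (mul_mem_gradedPiece h₀ hq (by ring)),
    β • p - ι k v₀ * r, sub_mem (Submodule.smul_mem _ β (by simpa using hp))
      (mul_mem_gradedPiece h₀ hr (by ring)),
    ι k v₀ * u + α • r - β • q, sub_mem (add_mem (mul_mem_gradedPiece h₀ hu (by ring))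
      (Submodule.smul_mem _ α (by convert hr using 2; ring)))
      (Submodule.smul_mem _ β (by convert hq using 2; ring)), ?_⟩
  simp only [map_add, map_smul, add_mul, mul_add, mul_sub, smul_mul_assoc, mul_smul_comm,
    mul_assoc, ι_mul_ι_mul_anticomm v₀ (b (.inl a)), ι_mul_ι_mul_anticomm v₀ (b (.inr a)),
    ι_mul_ι_mul_anticomm (b (.inr a)) (b (.inl a)), ι_mul_ι_mul_self, mul_neg, smul_neg,
    smul_zero, mul_zero]
  abel

theorem gradedPiece_insert_le_splitting (t : Finset I) (a : I) (d : ℤ) :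
    gradedPiece b (insert a t) d ≤ splitting b t a d := by
  rcases lt_or_ge d 0 with hd | hd
  · simp [gradedPiece, hd]
  obtain ⟨n, rfl⟩ := Int.eq_ofNat_of_zero_le hd
  clear hd
  induction n with
  | zero =>
    rw [gradedPiece_natCast, pow_zero, ← pow_zero ((pairSpan b t).map (ι k)), ← gradedPiece_natCast]
    exact gradedPiece_le_splitting t a _
  | succ n ih =>
    rw [gradedPiece_natCast, pow_succ', Submodule.mul_le]
    rintro _ ⟨v, hv, rfl⟩ z hz
    rw [← gradedPiece_natCast] at hz
    simpa only [Nat.cast_succ] using ι_mul_mem_splitting hv (ih hz)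

theorem splitting_le_gradedPiece_insert (t : Finset I) (a : I) (d : ℤ) :
    splitting b t a d ≤ gradedPiece b (insert a t) d := by
  rintro _ ⟨p, hp, q, hq, r, hr, u, hu, rfl⟩
  have hx := ι_inl_mem_gradedPiece_one (b := b) (mem_insert_self a t)
  have hy := ι_inr_mem_gradedPiece_one (b := b) (mem_insert_self a t)
  have hmono := gradedPiece_mono (b := b) (subset_insert a t)
  refine add_mem (add_mem (add_mem (hmono d hp) (mul_mem_gradedPiece hx (hmono _ hq) (by ring)))
    (mul_mem_gradedPiece hy (hmono _ hr) (by ring)))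
    (mul_mem_gradedPiece (mul_mem_gradedPiece hx hy rfl) (hmono _ hu) (by ring))

theorem gradedPiece_insert (t : Finset I) (a : I) (d : ℤ) :
    gradedPiece b (insert a t) d = splitting b t a d :=
  le_antisymm (gradedPiece_insert_le_splitting t a d) (splitting_le_gradedPiece_insert t a d)

theorem lefschetzElement_insert_pow_succ_mul {a : I} {t : Finset I} (ha : a ∉ t) (s : ℕ)
    (p q r u : ExteriorAlgebra k V) :
    lefschetzElement b (insert a t) ^ (s + 1) * (p + ι k (b (.inl a)) * q +
      ι k (b (.inr a)) * r + ι k (b (.inl a)) * ι k (b (.inr a)) * u) =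
    lefschetzElement b t ^ (s + 1) * p +
      ι k (b (.inl a)) * (lefschetzElement b t ^ (s + 1) * q) +
      ι k (b (.inr a)) * (lefschetzElement b t ^ (s + 1) * r) +
      ι k (b (.inl a)) * ι k (b (.inr a)) *
        (lefschetzElement b t ^ (s + 1) * u + (s + 1 : k) • (lefschetzElement b t ^ s * p)) := by
  set x := ι k (b (.inl a))
  set y := ι k (b (.inr a))
  set W := lefschetzElement b t
  have hyx : ∀ z, y * (x * z) = -(x * (y * z)) := ι_mul_ι_mul_anticomm _ _
  have hxx : ∀ z, x * (x * z) = 0 := ι_mul_ι_mul_self _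
  have hyy : ∀ z, y * (y * z) = 0 := ι_mul_ι_mul_self _
  have hWx : ∀ n z, W ^ n * (x * z) = x * (W ^ n * z) := fun n z => by
    rw [← mul_assoc, ((commute_lefschetzElement t x).pow_left n).eq, mul_assoc]
  have hWy : ∀ n z, W ^ n * (y * z) = y * (W ^ n * z) := fun n z => by
    rw [← mul_assoc, ((commute_lefschetzElement t y).pow_left n).eq, mul_assoc]
  have hinsert : lefschetzElement b (insert a t) = W + x * y := by
    rw [lefschetzElement, sum_insert ha, add_comm]
    rfl
  have hcomm : Commute W (x * y) := commute_lefschetzElement t (x * y)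
  rw [hinsert, hcomm.add_pow_succ_of_mul_self_eq_zero
    (by simp only [mul_assoc, hyx, hxx, mul_neg, neg_zero]) s, ← Nat.cast_smul_eq_nsmul k]
  simp only [add_mul, mul_add, smul_mul_assoc, mul_smul_comm, mul_assoc, hWx, hWy, hyx, hxx,
    hyy, mul_neg, neg_zero, mul_zero, smul_zero, add_zero, Nat.cast_add, Nat.cast_one]
  abel

end

theorem gradedPiece_eq_bot {t : Finset I} {d : ℤ} (h : 2 * (#t : ℤ) < d) :
    gradedPiece b t d = ⊥ := by
  classical
  induction t using Finset.induction_on generalizing d with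
  | empty =>
    obtain ⟨n, rfl⟩ : ∃ n : ℕ, d = (n + 1 : ℕ) :=
      ⟨(d - 1).toNat, by simp only [card_empty, Nat.cast_zero] at h; omega⟩
    rw [gradedPiece_natCast, pow_succ]
    simp [pairSpan]
  | @insert a t ha ih =>
    rw [card_insert_of_notMem ha, Nat.cast_succ] at h
    refine eq_bot_iff.2 fun z hz => ?_
    obtain ⟨p, hp, q, hq, r, hr, u, hu, rfl⟩ := (gradedPiece_insert t a d).le hz
    rw [ih (by omega)] at hp hq hr hu
    simp_all

theorem powSurjective_empty : PowSurjective b ∅ := by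
  intro d s hds _ z hz
  rcases Nat.eq_zero_or_pos s with rfl | hs
  · exact ⟨z, by simpa using hz, by simp⟩
  · rw [gradedPiece_eq_bot (by simp only [card_empty, Nat.cast_zero] at hds ⊢; omega),
      Submodule.mem_bot] at hz
    exact ⟨0, zero_mem _, by simp [hz]⟩

theorem PowInjective.insert [DecidableEq I] {a : I} {t : Finset I} (ha : a ∉ t)
    (ih : PowInjective b t) :
    PowInjective b (insert a t) := by
  intro d s hds hk z hz hWz
  rw [card_insert_of_notMem ha, Nat.cast_succ] at hds
  rcases lt_or_ge d 0 with hd | hd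
  · exact eq_zero_of_mem_gradedPiece_of_neg hd hz
  obtain _ | s := s
  · simpa using hWz
  push_cast at hds hk
  obtain ⟨p, hp, q, hq, r, hr, u, hu, rfl⟩ := (gradedPiece_insert t a d).le hz
  rw [lefschetzElement_insert_pow_succ_mul ha] at hWz
  obtain ⟨hp0, hq0, hr0, hu0⟩ := eq_zero_of_splitting_eq_zero ha
    (lefschetzElement_pow_mul_mem_gradedPiece hp (s + 1) rfl)
    (lefschetzElement_pow_mul_mem_gradedPiece hq (s + 1) rfl)
    (lefschetzElement_pow_mul_mem_gradedPiece hr (s + 1) rfl)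
    (add_mem (lefschetzElement_pow_mul_mem_gradedPiece hu (s + 1) rfl)
      (Submodule.smul_mem _ _ (lefschetzElement_pow_mul_mem_gradedPiece hp s (by push_cast; ring))))
    hWz
  have hq' : q = 0 :=
    ih (d - 1) (s + 1) (by push_cast; omega) (hk.mono (by push_cast; omega)) q hq hq0
  have hr' : r = 0 :=
    ih (d - 1) (s + 1) (by push_cast; omega) (hk.mono (by push_cast; omega)) r hr hr0
  obtain ⟨rfl, rfl⟩ : p = 0 ∧ u = 0 := by
    by_cases hlt : d + (s + 1) ≤ #t
    · obtain rfl := ih d (s + 1) (by push_cast; omega) (hk.mono (by push_cast; omega)) p hp hp0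
      refine ⟨rfl, ih (d - 2) (s + 1) (by push_cast; omega) (hk.mono (by push_cast; omega)) u hu
        (by simpa using hu0)⟩
    · -- multiplying the last component by `W` kills its `p`-term, since `W^(s+1) p = 0`
      have hWu : lefschetzElement b t ^ (s + 2) * u = 0 := by
        simpa [mul_add, ← mul_assoc, ← pow_succ', hp0, mul_smul_comm] using
          congrArg (lefschetzElement b t * ·) hu0
      obtain rfl :=
        ih (d - 2) (s + 2) (by push_cast; omega) (hk.mono (by push_cast; omega)) u hu hWu
      have hσ : (s + 1 : k) ≠ 0 := by exact_mod_cast hk (s + 1) (by omega) (by push_cast; omega)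
      exact ⟨ih d s (by omega) (hk.mono (by omega)) p hp (by simpa [hσ] using hu0), rfl⟩
  simp [hq', hr']

theorem PowSurjective.insert [DecidableEq I] {a : I} {t : Finset I} (ha : a ∉ t)
    (ih : PowSurjective b t) :
    PowSurjective b (insert a t) := by
  intro d s hds hk z hz
  rw [card_insert_of_notMem ha, Nat.cast_succ] at hds hk
  obtain _ | s := s
  · exact ⟨z, by simpa using hz, by simp⟩
  push_cast at hds hz
  rcases lt_or_ge d 0 with hd | hd
  · rw [gradedPiece_eq_bot (by rw [card_insert_of_notMem ha]; push_cast; omega),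
      Submodule.mem_bot] at hz
    exact ⟨0, zero_mem _, by simp [hz]⟩
  obtain ⟨p, hp, q, hq, r, hr, u, hu, rfl⟩ := (gradedPiece_insert t a _).le hz
  obtain ⟨q', hq', rfl⟩ := ih (d - 1) (s + 1) (by push_cast; omega) (hk.mono (by omega)) q
    (by convert hq using 2; push_cast; ring)
  obtain ⟨r', hr', rfl⟩ := ih (d - 1) (s + 1) (by push_cast; omega) (hk.mono (by omega)) r
    (by convert hr using 2; push_cast; ring)
  obtain ⟨p', hp', u', hu', rfl, rfl⟩ := ih.exists_preimage_pair hd (by omega)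
    (by convert hk using 1; ring) hp (by convert hu using 2; ring)
  exact ⟨_, (gradedPiece_insert t a d).ge ⟨p', hp', q', hq', r', hr', u', hu', rfl⟩,
    lefschetzElement_insert_pow_succ_mul ha s _ _ _ _⟩

variable (b) in
theorem powInjective (t : Finset I) : PowInjective b t := by
  classical
  induction t using Finset.induction_on with
  | empty => exact powInjective_empty
  | @insert a t ha ih => exact ih.insert ha

variable (b) in
theorem powSurjective (t : Finset I) : PowSurjective b t := by
  classical
  induction t using Finset.induction_on with
  | empty => exact powSurjective_empty
  | @insert a t ha ih => exact ih.insert ha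

end Lefschetz

end

open Lefschetz in
/-- Lefschetz property: let `Λ` be the exterior algebra over a field `k` on a basis
`x_1,…,x_n,y_1,…,y_n` (degree one), and `w = ∑ x_i y_i`. If `char k = 0` or
`char k > (n+1)/2`, then multiplication by `w`, as a map `Λ_i → Λ_{i+2}`, is injective
for `i ≤ n-1` and surjective for `i ≥ n-1`. Here `Λ_i = (range ι)^i` is the degree-`i`
component of the exterior algebra. -/
theorem stmt_5 (k V : Type*) [Field k] [AddCommGroup V] [Module k V] (n : ℕ)
    (b : Module.Basis (Fin n ⊕ Fin n) k V)
    (hchar : ∀ p : ℕ, CharP k p → p = 0 ∨ n + 1 < 2 * p) :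
    let Λdeg : ℕ → Submodule k (ExteriorAlgebra k V) :=
      fun i => LinearMap.range (ι k : V →ₗ[k] ExteriorAlgebra k V) ^ i
    let w : ExteriorAlgebra k V := ∑ i : Fin n, ι k (b (Sum.inl i)) * ι k (b (Sum.inr i))
    ∀ i : ℕ,
      (i + 1 ≤ n → ∀ x ∈ Λdeg i, w * x = 0 → x = 0) ∧
      (n ≤ i + 1 → ∀ y ∈ Λdeg (i + 2), ∃ x ∈ Λdeg i, w * x = y) := by
  intro Λdeg w i
  have hΛ (j : ℕ) : Λdeg j = gradedPiece b Finset.univ j := by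
    rw [gradedPiece_natCast, pairSpan_univ, Submodule.map_top]
  have hw : w = lefschetzElement b Finset.univ := rfl
  have hk : CastNeZeroUpToHalf k (n + 1 : ℕ) := castNeZeroUpToHalf_of_charP hchar
  have hcard : ((Finset.univ : Finset (Fin n)).card : ℤ) = n := by rw [Finset.card_fin]
  refine ⟨fun hi x hx hwx => ?_, fun hi y hy => ?_⟩
  · exact powInjective b Finset.univ i 1 (by push_cast; omega) (hk.mono (by push_cast; omega)) x
      (hΛ i ▸ hx) (by rwa [pow_one, ← hw])
  · obtain ⟨x, hx, rfl⟩ := powSurjective b Finset.univ i 1 (by push_cast; omega)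
      (hk.mono (by push_cast; omega)) y (by simpa [hΛ] using hy)
    exact ⟨x, hΛ i ▸ hx, by rw [pow_one, hw]⟩
end

section
/- Let k be a field of characteristic 0 and \Lambda the exterior algebra on x_1,...,x_n,y_1,...,y_n. Let \lambda_w be multiplication by w = \sum_i x_i y_i, let c = \sum_i y_i^* x_i^* be the degree -2 operator given by composing the contraction derivations dual to x_i and y_i, and let h = [c, \lambda_w]. Then h acts on \Lambda_j as multiplication by n - j, and moreover [c, h] = -2c and [\lambda_w, h] = 2\lambda_w, so that (\lambda_w, c, h) define an sl_2(k)-representation on \Lambda. -/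
/-!
Write `λ_v` for left multiplication by `v` and `∂_f` for contraction with `f`. These odd operators
satisfy `∂_f λ_v + λ_v ∂_f = f v` and anticommute among themselves, so expanding `[c, λ_w]` gives
`h = n - N` with `N = ∑_e λ_{b_e} ∂_{b_e^*}` the number operator. The same anticommutation rules
give `[N, λ_v] = λ_v` and `[N, ∂_f] = -∂_f`: the first shows that `N` acts on `Λ_j` as `j`, and
the two together give `[N, c] = -2c` and `[N, λ_w] = 2λ_w`, i.e. the remaining two relations.
-/

open ExteriorAlgebra Module

section Commutators

-- so that the general Lie bracket API (`sum_lie`, `lie_sub`, ...) applies to ring commutators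
attribute [local instance] LieRing.ofAssociativeRing

section RingIdentities

variable {R A : Type*} [CommRing R] [Ring A] [Algebra R A]

theorem Ring.lie_mul (n a b : A) : ⁅n, a * b⁆ = ⁅n, a⁆ * b + a * ⁅n, b⁆ := by
  simp only [Ring.lie_def]; noncomm_ring

theorem Ring.mul_lie (a b n : A) : ⁅a * b, n⁆ = a * ⁅b, n⁆ + ⁅a, n⁆ * b := by
  simp only [Ring.lie_def]; noncomm_ring

theorem Ring.lie_mul_eq_anticomm (d x y : A) :
    ⁅d, x * y⁆ = (d * x + x * d) * y - x * (d * y + y * d) := by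
  simp only [Ring.lie_def]; noncomm_ring

theorem Ring.mul_lie_eq_anticomm (x d z : A) :
    ⁅x * d, z⁆ = x * (d * z + z * d) - (z * x + x * z) * d := by
  simp only [Ring.lie_def]; noncomm_ring

theorem Ring.lie_natCast_sub (x y : A) (n : ℕ) : ⁅x, n - y⁆ = ⁅y, x⁆ := by
  rw [lie_sub, commute_iff_lie_eq.mp (Nat.commute_cast x n), zero_sub, lie_skew]

theorem Ring.lie_mul_mul_of_anticomm {a b x y : A} {t : R}
    (hax : a * x + x * a = 0) (hay : a * y + y * a = t • 1)
    (hbx : b * x + x * b = t • 1) (hby : b * y + y * b = 0) :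
    ⁅a * b, x * y⁆ = t • (t • 1 - y * a - x * b) := by
  rw [Ring.mul_lie, Ring.lie_mul_eq_anticomm, Ring.lie_mul_eq_anticomm, hax, hay, hbx, hby]
  simp only [smul_mul_assoc, one_mul, mul_smul_comm, mul_one, mul_zero, zero_mul, sub_zero,
    zero_sub, neg_mul, eq_sub_of_add_eq hay]
  module

end RingIdentities

namespace ExteriorAlgebra

variable {R M : Type*} [CommRing R] [AddCommGroup M] [Module R M]

local notation "δ" => CliffordAlgebra.contractLeft (Q := (0 : QuadraticForm R M))

local notation "μ" v:max => LinearMap.mulLeft R (ι R v)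

theorem contractLeft_mul_mulLeft_ι_add (f : Dual R M) (v : M) :
    (δ f * μ v + μ v * δ f : Module.End R (ExteriorAlgebra R M)) = f v • 1 := by
  ext a
  simp [CliffordAlgebra.contractLeft_ι_mul]

theorem mulLeft_ι_mul_add_swap (u v : M) :
    (μ u * μ v + μ v * μ u : Module.End R (ExteriorAlgebra R M)) = 0 := by
  ext a
  simp [← mul_assoc, ← add_mul, ι_add_mul_swap]

theorem contractLeft_mul_add_swap (f g : Dual R M) :
    (δ f * δ g + δ g * δ f : Module.End R (ExteriorAlgebra R M)) = 0 := by
  ext a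
  simp [CliffordAlgebra.contractLeft_comm (d := f)]

section NumberOperator

variable {ι' : Type*} [Fintype ι']

variable (R) in
noncomputable def numberOperator (b : Basis ι' R M) : Module.End R (ExteriorAlgebra R M) :=
  ∑ e, μ (b e) * δ (b.coord e)

theorem lie_numberOperator_mulLeft_ι (b : Basis ι' R M) (v : M) :
    ⁅numberOperator R b, μ v⁆ = μ v := by
  rw [numberOperator, sum_lie]
  simp only [Ring.mul_lie_eq_anticomm, contractLeft_mul_mulLeft_ι_add,
    mulLeft_ι_mul_add_swap, zero_mul, sub_zero, mul_smul_comm, mul_one]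
  refine LinearMap.ext fun a => ?_
  simp only [LinearMap.sum_apply, LinearMap.smul_apply, LinearMap.mulLeft_apply, ← smul_mul_assoc,
    ← Finset.sum_mul, ← map_smul, ← map_sum, Basis.coord_apply, b.sum_repr]

theorem lie_numberOperator_contractLeft (b : Basis ι' R M) (f : Dual R M) :
    ⁅numberOperator R b, δ f⁆ = -δ f := by
  simp only [numberOperator, sum_lie, Ring.mul_lie_eq_anticomm, contractLeft_mul_add_swap,
    contractLeft_mul_mulLeft_ι_add, mul_zero, zero_sub, smul_mul_assoc, one_mul,
    Finset.sum_neg_distrib, ← map_smul, ← map_sum, b.sum_dual_apply_smul_coord]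

theorem numberOperator_apply_of_mem_pow (b : Basis ι' R M) {j : ℕ} {a : ExteriorAlgebra R M}
    (ha : a ∈ LinearMap.range (ι R : M →ₗ[R] ExteriorAlgebra R M) ^ j) :
    numberOperator R b a = j • a := by
  induction ha using Submodule.pow_induction_on_left' with
  | algebraMap r => simp [numberOperator, CliffordAlgebra.contractLeft_algebraMap]
  | add x y i _ _ ihx ihy => simp only [map_add, ihx, ihy, smul_add]
  | mem_mul m hm i x _ ih =>
    obtain ⟨v, rfl⟩ := hm
    have hcomm := congr($(lie_numberOperator_mulLeft_ι b v) x)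
    rw [Ring.lie_def, LinearMap.sub_apply, sub_eq_iff_eq_add] at hcomm
    simp only [Module.End.mul_apply, LinearMap.mulLeft_apply, ih] at hcomm
    rw [hcomm, mul_smul_comm, succ_nsmul']

theorem lie_numberOperator_contractLeft_mul (b : Basis ι' R M) (f g : Dual R M) :
    ⁅numberOperator R b, δ f * δ g⁆ = (-2 : ℤ) • (δ f * δ g) := by
  rw [Ring.lie_mul, lie_numberOperator_contractLeft, lie_numberOperator_contractLeft]
  simp only [neg_mul, mul_neg]
  module

theorem lie_numberOperator_mulLeft_ι_mul (b : Basis ι' R M) (u v : M) :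
    ⁅numberOperator R b, μ u * μ v⁆ = (2 : ℤ) • (μ u * μ v) := by
  rw [Ring.lie_mul, lie_numberOperator_mulLeft_ι, lie_numberOperator_mulLeft_ι, two_smul]

end NumberOperator

section Sl2

variable {n : ℕ} (b : Basis (Fin n ⊕ Fin n) R M)

theorem lie_contractLeft_mul_mulLeft_mul_self (i : Fin n) :
    ⁅δ (b.coord (.inr i)) * δ (b.coord (.inl i)), μ (b (.inl i)) * μ (b (.inr i))⁆ =
      1 - μ (b (.inr i)) * δ (b.coord (.inr i)) - μ (b (.inl i)) * δ (b.coord (.inl i)) := by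
  rw [Ring.lie_mul_mul_of_anticomm (t := (1 : R))] <;>
    simp [contractLeft_mul_mulLeft_ι_add, Basis.coord_apply]

theorem lie_contractLeft_mul_mulLeft_mul_of_ne {i j : Fin n} (hij : i ≠ j) :
    ⁅δ (b.coord (.inr i)) * δ (b.coord (.inl i)), μ (b (.inl j)) * μ (b (.inr j))⁆ = 0 := by
  rw [Ring.lie_mul_mul_of_anticomm (t := (0 : R))] <;>
    simp [contractLeft_mul_mulLeft_ι_add, Basis.coord_apply, hij]

theorem lie_sum_contractLeft_sum_mulLeft :
    ⁅∑ i, δ (b.coord (.inr i)) * δ (b.coord (.inl i)), ∑ j, μ (b (.inl j)) * μ (b (.inr j))⁆ =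
      n - numberOperator R b := by
  simp only [sum_lie, lie_sum]
  rw [Finset.sum_congr rfl fun j _ => Fintype.sum_eq_single j fun i hij =>
    lie_contractLeft_mul_mulLeft_mul_of_ne b hij]
  simp only [lie_contractLeft_mul_mulLeft_mul_self, Finset.sum_sub_distrib, numberOperator,
    Fintype.sum_sum_type]
  simp only [Finset.sum_const, Finset.card_univ, Fintype.card_fin, nsmul_eq_mul, mul_one]
  abel

theorem lie_numberOperator_sum_contractLeft_mul :
    ⁅numberOperator R b, ∑ i, δ (b.coord (.inr i)) * δ (b.coord (.inl i))⁆ =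
      (-2 : ℤ) • ∑ i, δ (b.coord (.inr i)) * δ (b.coord (.inl i)) := by
  simp only [lie_sum, lie_numberOperator_contractLeft_mul, Finset.smul_sum]

theorem lie_numberOperator_sum_mulLeft_mul :
    ⁅numberOperator R b, ∑ j, μ (b (.inl j)) * μ (b (.inr j))⁆ =
      (2 : ℤ) • ∑ j, μ (b (.inl j)) * μ (b (.inr j)) := by
  simp only [lie_sum, lie_numberOperator_mulLeft_ι_mul, Finset.smul_sum]

end Sl2

end ExteriorAlgebra

end Commutators

theorem stmt_15_general (k V : Type*) [Field k] [AddCommGroup V] [Module k V]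
    (n : ℕ) (b : Basis (Fin n ⊕ Fin n) k V) :
    let w : ExteriorAlgebra k V := ∑ i : Fin n, ι k (b (Sum.inl i)) * ι k (b (Sum.inr i))
    let L : ExteriorAlgebra k V →ₗ[k] ExteriorAlgebra k V := LinearMap.mulLeft k w
    let c : ExteriorAlgebra k V →ₗ[k] ExteriorAlgebra k V :=
      ∑ i : Fin n,
        (CliffordAlgebra.contractLeft (Q := (0 : QuadraticForm k V)) (b.coord (Sum.inr i))) ∘ₗ
          (CliffordAlgebra.contractLeft (Q := (0 : QuadraticForm k V)) (b.coord (Sum.inl i)))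
    let h : ExteriorAlgebra k V →ₗ[k] ExteriorAlgebra k V := c ∘ₗ L - L ∘ₗ c
    (∀ j : ℕ, ∀ a ∈ (LinearMap.range (ι k : V →ₗ[k] ExteriorAlgebra k V) ^ j :
        Submodule k (ExteriorAlgebra k V)), h a = ((n : ℤ) - (j : ℤ)) • a) ∧
      c ∘ₗ h - h ∘ₗ c = (-2 : ℤ) • c ∧
      L ∘ₗ h - h ∘ₗ L = (2 : ℤ) • L := by
  intro w L c h
  have hL :
      L = ∑ j, LinearMap.mulLeft k (ι k (b (.inl j))) * LinearMap.mulLeft k (ι k (b (.inr j))) :=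
    LinearMap.ext fun a => by simp [L, w, Finset.sum_mul, mul_assoc]
  have hh : h = n - numberOperator k b := by
    rw [← lie_sum_contractLeft_sum_mulLeft b, ← hL]
    rfl
  have hlie : ∀ T, T ∘ₗ h - h ∘ₗ T = ⁅numberOperator k b, T⁆ := fun T => by
    rw [hh]
    exact Ring.lie_natCast_sub T _ n
  refine ⟨fun j a ha => ?_, ?_, ?_⟩
  · rw [hh, LinearMap.sub_apply, Module.End.natCast_apply, numberOperator_apply_of_mem_pow b ha,
      sub_smul, natCast_zsmul, natCast_zsmul]
  · rw [hlie]
    exact lie_numberOperator_sum_contractLeft_mul b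
  · rw [hlie, hL]
    exact lie_numberOperator_sum_mulLeft_mul b

/-- `sl₂`-structure on the exterior algebra: let `k` be a field of characteristic `0`
and `Λ` the exterior algebra on `x_1,…,x_n,y_1,…,y_n`. Let `λ_w` be multiplication by
`w = ∑ x_i y_i`, let `c = ∑ y_i* ∘ x_i*` (composites of the contraction operators dual
to the basis), and `h = [c, λ_w]`. Then `h` acts on `Λ_j` as multiplication by `n - j`,
`[c, h] = -2c` and `[λ_w, h] = 2λ_w`, so `(λ_w, c, h)` define an `sl₂(k)`-representation
on `Λ`. -/
theorem stmt_15 (k V : Type*) [Field k] [CharZero k] [AddCommGroup V] [Module k V]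
    (n : ℕ) (b : Basis (Fin n ⊕ Fin n) k V) :
    let w : ExteriorAlgebra k V := ∑ i : Fin n, ι k (b (Sum.inl i)) * ι k (b (Sum.inr i))
    let L : ExteriorAlgebra k V →ₗ[k] ExteriorAlgebra k V := LinearMap.mulLeft k w
    let c : ExteriorAlgebra k V →ₗ[k] ExteriorAlgebra k V :=
      ∑ i : Fin n,
        (CliffordAlgebra.contractLeft (Q := (0 : QuadraticForm k V)) (b.coord (Sum.inr i))) ∘ₗ
          (CliffordAlgebra.contractLeft (Q := (0 : QuadraticForm k V)) (b.coord (Sum.inl i)))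
    let h : ExteriorAlgebra k V →ₗ[k] ExteriorAlgebra k V := c ∘ₗ L - L ∘ₗ c
    (∀ j : ℕ, ∀ a ∈ (LinearMap.range (ι k : V →ₗ[k] ExteriorAlgebra k V) ^ j :
        Submodule k (ExteriorAlgebra k V)), h a = ((n : ℤ) - (j : ℤ)) • a) ∧
      c ∘ₗ h - h ∘ₗ c = (-2 : ℤ) • c ∧
      L ∘ₗ h - h ∘ₗ L = (2 : ℤ) • L :=
  stmt_15_general k V n b
end
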